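/- (Intermediate bound in the proof of Theorem 3.2(i).) Under the Dantzig-selector hypotheses, with h := θ₀ − θ̂, S := |T₀| and K₄ := 4/ν, one has κ(T₀; J)² · ‖h_{T₀}‖₁² ≤ S ε ‖h‖₁² + K₄ S γ ‖h‖₁, where ε := max_{i,j} |(V(θ₀) − J)_{ij}|. -/

import Mathlib

open Finset

/-- ℓ₁ norm on `Fin p → ℝ`. -/
noncomputable def l1 {p : ℕ} (v : Fin p → ℝ) : ℝ := ∑ i, |v i|

/-- ℓ₁ norm of the subvector indexed by `T`. -/
noncomputable def l1on {p : ℕ} (T : Finset (Fin p)) (v : Fin p → ℝ) : ℝ := ∑ i ∈ T, |v i|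

/-- ℓ₂ norm on `Fin p → ℝ`. -/
noncomputable def l2 {p : ℕ} (v : Fin p → ℝ) : ℝ := Real.sqrt (∑ i, (v i) ^ 2)

/-- ℓ_∞ norm on `Fin p → ℝ`. -/
noncomputable def linf {p : ℕ} (v : Fin p → ℝ) : ℝ := ⨆ i, |v i|

/-- ℓ_q norm on `Fin p → ℝ` for real `q ≥ 1`. -/
noncomputable def lqnorm {p : ℕ} (q : ℝ) (v : Fin p → ℝ) : ℝ := (∑ i, |v i| ^ q) ^ (1 / q)

/-- Quadratic form `hᵀ J h`. -/
noncomputable def quadForm {p : ℕ} (J : Matrix (Fin p) (Fin p) ℝ) (h : Fin p → ℝ) : ℝ :=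
  ∑ i, ∑ j, h i * J i j * h j

/-- The cone `C_T = {h : ‖h_{Tᶜ}‖₁ ≤ ‖h_T‖₁}`. -/
def cone {p : ℕ} (T : Finset (Fin p)) : Set (Fin p → ℝ) := {h | l1on Tᶜ h ≤ l1on T h}

/-- Compatibility factor `κ(T; J)`. -/
noncomputable def kappa {p : ℕ} (T : Finset (Fin p)) (J : Matrix (Fin p) (Fin p) ℝ) : ℝ :=
  sInf {r | ∃ h : Fin p → ℝ, h ≠ 0 ∧ h ∈ cone T ∧
    r = Real.sqrt T.card * Real.sqrt (quadForm J h) / l1on T h}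

/-- Restricted eigenvalue `RE(T; J)`. -/
noncomputable def RE {p : ℕ} (T : Finset (Fin p)) (J : Matrix (Fin p) (Fin p) ℝ) : ℝ :=
  sInf {r | ∃ h : Fin p → ℝ, h ≠ 0 ∧ h ∈ cone T ∧
    r = Real.sqrt (quadForm J h) / l2 h}

/-- Weak cone invertibility factor at `q = ∞`, `F_∞(T; J)`. -/
noncomputable def Finf {p : ℕ} (T : Finset (Fin p)) (J : Matrix (Fin p) (Fin p) ℝ) : ℝ :=
  sInf {r | ∃ h : Fin p → ℝ, h ≠ 0 ∧ h ∈ cone T ∧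
    r = Real.sqrt (quadForm J h) / linf h}

/-- Weak cone invertibility factor `F_q(T; J)` for `q ∈ [1,∞)`
(with the quadratic form without square root, as in the paper's proofs). -/
noncomputable def Fq {p : ℕ} (q : ℝ) (T : Finset (Fin p)) (J : Matrix (Fin p) (Fin p) ℝ) : ℝ :=
  sInf {r | ∃ h : Fin p → ℝ, h ≠ 0 ∧ h ∈ cone T ∧
    r = (T.card : ℝ) ^ (1 / q) * quadForm J h / (l1on T h * lqnorm q h)}

/-- `g(x) = (e^{2x} - 1)/x` for `x ≠ 0`, `g(0) = 2`. -/
noncomputable def g (x : ℝ) : ℝ := if x = 0 then 2 else (Real.exp (2 * x) - 1) / x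

/-- Gradient of the log-quasi-likelihood (divided by `n`), with `b = 0`, `Δ = 1/n`:
`ψ(θ)_i = (1/(nΔ)) Σ_k z_{k,i}(e^{-2⟨θ,z_k⟩}(x_k - x_{k-1})² - Δ)`. -/
noncomputable def psiD {n p : ℕ} (x : Fin (n + 1) → ℝ) (z : Fin n → Fin p → ℝ)
    (θ : Fin p → ℝ) (i : Fin p) : ℝ :=
  (1 / ((n : ℝ) * (1 / n))) * ∑ k, z k i *
    (Real.exp (-2 * ∑ j, θ j * z k j) * (x k.succ - x k.castSucc) ^ 2 - 1 / n)

/-- Negative Hessian (divided by `n`):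
`V(θ) = (2/(nΔ)) Σ_k e^{-2⟨θ,z_k⟩}(x_k - x_{k-1})² z_k z_kᵀ`. -/
noncomputable def VD {n p : ℕ} (x : Fin (n + 1) → ℝ) (z : Fin n → Fin p → ℝ)
    (θ : Fin p → ℝ) : Matrix (Fin p) (Fin p) ℝ := fun i j =>
  (2 / ((n : ℝ) * (1 / n))) * ∑ k, Real.exp (-2 * ∑ l, θ l * z k l) *
    (x k.succ - x k.castSucc) ^ 2 * z k i * z k j

/-- `J = (2/n) Σ_k z_k z_kᵀ`. -/
noncomputable def JD {n p : ℕ} (z : Fin n → Fin p → ℝ) : Matrix (Fin p) (Fin p) ℝ :=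
  fun i j => (2 / (n : ℝ)) * ∑ k, z k i * z k j

/-- `ε = max_{i,j} |(V(θ) - J)_{ij}|`. -/
noncomputable def epsD {n p : ℕ} (x : Fin (n + 1) → ℝ) (z : Fin n → Fin p → ℝ)
    (θ : Fin p → ℝ) : ℝ :=
  ⨆ i, ⨆ j, |VD x z θ i j - JD z i j|

/-!
Write `h = θ₀ - θ̂` and `u_k = ⟨h, z_k⟩`. Minimality of `‖θ̂‖₁` puts `h` in the cone `C_{T₀}`
and gives `‖h‖₁ ≤ 2‖θ₀‖₁`, so every `u_k` lies in `I` and `g(u_k) ≥ ν`. Since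
`e^{-2⟨θ̂,z_k⟩} - e^{-2⟨θ₀,z_k⟩} = e^{-2⟨θ₀,z_k⟩} g(u_k) u_k`, the pairing `⟨h, ψ(θ̂) - ψ(θ₀)⟩`
dominates `(ν/2) hᵀV(θ₀)h`, while both gradients are at most `γ` in sup norm, so the pairing is
at most `2γ‖h‖₁`. Passing from `V(θ₀)` to `J` costs `ε‖h‖₁²`, and the definition of `κ` applied
to `h ∈ C_{T₀}` concludes.
-/

section Norms

variable {p : ℕ}

lemma l1on_nonneg (T : Finset (Fin p)) (v : Fin p → ℝ) : 0 ≤ l1on T v :=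
  sum_nonneg fun _ _ => abs_nonneg _

lemma l1_sub_le (u v : Fin p → ℝ) : l1 (u - v) ≤ l1 u + l1 v := by
  rw [l1, l1, l1, ← sum_add_distrib]
  exact sum_le_sum fun i _ => abs_sub (u i) (v i)

lemma abs_le_linf (v : Fin p → ℝ) (i : Fin p) : |v i| ≤ linf v :=
  le_ciSup (f := fun i => |v i|) (Set.finite_range _).bddAbove i

lemma abs_dotProduct_le_l1_mul (h v : Fin p → ℝ) {C : ℝ} (hv : ∀ i, |v i| ≤ C) :
    |h ⬝ᵥ v| ≤ l1 h * C := by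
  calc |h ⬝ᵥ v| ≤ ∑ i, |h i| * |v i| := by
        simpa only [dotProduct, abs_mul] using abs_sum_le_sum_abs (fun i => h i * v i) univ
    _ ≤ ∑ i, |h i| * C := sum_le_sum fun i _ => by gcongr; exact hv i
    _ = l1 h * C := by rw [l1, sum_mul]

lemma dotProduct_sub_le_of_linf_le (h u v : Fin p → ℝ) {γ : ℝ}
    (hu : linf u ≤ γ) (hv : linf v ≤ γ) : h ⬝ᵥ (u - v) ≤ 2 * γ * l1 h := by
  have hu' := abs_dotProduct_le_l1_mul h u fun i => (abs_le_linf u i).trans hu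
  have hv' := abs_dotProduct_le_l1_mul h v fun i => (abs_le_linf v i).trans hv
  rw [dotProduct_sub]
  linarith [le_abs_self (h ⬝ᵥ u), neg_abs_le (h ⬝ᵥ v)]

lemma abs_sub_dotProduct_le {θ₀ θ v : Fin p → ℝ} {C : ℝ} (hC : 0 ≤ C)
    (hv : ∀ i, |v i| ≤ C) (hθ : l1 θ ≤ l1 θ₀) : |(θ₀ - θ) ⬝ᵥ v| ≤ 2 * C * l1 θ₀ :=
  calc |(θ₀ - θ) ⬝ᵥ v| ≤ l1 (θ₀ - θ) * C := abs_dotProduct_le_l1_mul _ _ hv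
    _ ≤ (l1 θ₀ + l1 θ) * C := by gcongr; exact l1_sub_le θ₀ θ
    _ ≤ 2 * C * l1 θ₀ := by nlinarith

end Norms

section Cone

variable {p : ℕ}

lemma sub_mem_cone_support {θ₀ θ : Fin p → ℝ} (hθ : l1 θ ≤ l1 θ₀) :
    θ₀ - θ ∈ cone (univ.filter fun j => θ₀ j ≠ 0) := by
  set T := univ.filter fun j => θ₀ j ≠ 0
  have hzero : ∀ i ∈ Tᶜ, θ₀ i = 0 := fun i hi => by simpa [T] using hi
  have hoff : l1on Tᶜ (θ₀ - θ) = ∑ i ∈ Tᶜ, |θ i| :=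
    sum_congr rfl fun i hi => by simp [hzero i hi]
  have hθ₀ : l1 θ₀ = ∑ i ∈ T, |θ₀ i| := by
    rw [l1, ← sum_add_sum_compl T, sum_eq_zero (s := Tᶜ) fun i hi => by simp [hzero i hi],
      add_zero]
  have hθsplit : l1 θ = ∑ i ∈ T, |θ i| + ∑ i ∈ Tᶜ, |θ i| := (sum_add_sum_compl T _).symm
  have hon : ∑ i ∈ T, |θ₀ i| - ∑ i ∈ T, |θ i| ≤ l1on T (θ₀ - θ) := by
    rw [← sum_sub_distrib]
    exact sum_le_sum fun i _ => abs_sub_abs_le_abs_sub (θ₀ i) (θ i)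
  change l1on Tᶜ (θ₀ - θ) ≤ l1on T (θ₀ - θ)
  linarith

lemma kappa_nonneg (T : Finset (Fin p)) (J : Matrix (Fin p) (Fin p) ℝ) : 0 ≤ kappa T J := by
  apply Real.sInf_nonneg
  rintro _ ⟨h, -, -, rfl⟩
  exact div_nonneg (by positivity) (l1on_nonneg _ _)

lemma kappa_le {T : Finset (Fin p)} {J : Matrix (Fin p) (Fin p) ℝ} {h : Fin p → ℝ}
    (hh : h ≠ 0) (hc : h ∈ cone T) :
    kappa T J ≤ Real.sqrt T.card * Real.sqrt (quadForm J h) / l1on T h := by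
  refine csInf_le ⟨0, ?_⟩ ⟨h, hh, hc, rfl⟩
  rintro _ ⟨h, -, -, rfl⟩
  exact div_nonneg (by positivity) (l1on_nonneg _ _)

lemma kappa_sq_mul_l1on_sq_le {T : Finset (Fin p)} {J : Matrix (Fin p) (Fin p) ℝ}
    {h : Fin p → ℝ} (hc : h ∈ cone T) (hJ : 0 ≤ quadForm J h) :
    kappa T J ^ 2 * l1on T h ^ 2 ≤ T.card * quadForm J h := by
  rcases (l1on_nonneg T h).eq_or_lt with hT | hT
  · rw [← hT, zero_pow two_ne_zero, mul_zero]
    exact mul_nonneg (Nat.cast_nonneg _) hJ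
  have hh : h ≠ 0 := fun h0 => hT.ne' (by simp [h0, l1on])
  calc kappa T J ^ 2 * l1on T h ^ 2
      ≤ (Real.sqrt T.card * Real.sqrt (quadForm J h) / l1on T h) ^ 2 * l1on T h ^ 2 := by
        gcongr
        · exact kappa_nonneg T J
        · exact kappa_le hh hc
    _ = T.card * quadForm J h := by
        rw [div_pow, div_mul_cancel₀ _ (by positivity), mul_pow,
          Real.sq_sqrt (Nat.cast_nonneg _), Real.sq_sqrt hJ]

end Cone

section QuadForm

variable {n p : ℕ}

lemma quadForm_sub (A B : Matrix (Fin p) (Fin p) ℝ) (h : Fin p → ℝ) :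
    quadForm (A - B) h = quadForm A h - quadForm B h := by
  simp only [quadForm, ← sum_sub_distrib, Matrix.sub_apply, mul_sub, sub_mul]

lemma quadForm_le_l1_sq_mul {A : Matrix (Fin p) (Fin p) ℝ} {ε : ℝ} (hA : ∀ i j, |A i j| ≤ ε)
    (h : Fin p → ℝ) : quadForm A h ≤ ε * l1 h ^ 2 := by
  rw [l1, sq, sum_mul_sum, mul_sum]
  refine sum_le_sum fun i _ => ?_
  rw [mul_sum]
  refine sum_le_sum fun j _ => ?_
  calc h i * A i j * h j ≤ |h i| * |A i j| * |h j| := by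
        simpa only [abs_mul] using le_abs_self (h i * A i j * h j)
    _ ≤ |h i| * ε * |h j| := by gcongr; exact hA i j
    _ = ε * (|h i| * |h j|) := by ring

lemma quadForm_weightedGram (c : ℝ) (w : Fin n → ℝ) (z : Fin n → Fin p → ℝ) (h : Fin p → ℝ) :
    quadForm (fun i j => c * ∑ k, w k * z k i * z k j) h = c * ∑ k, w k * (h ⬝ᵥ z k) ^ 2 := by
  simp only [quadForm, dotProduct, sq, mul_sum, sum_mul]
  refine (sum_congr rfl fun i _ => sum_comm).trans ?_
  rw [sum_comm]
  exact sum_congr rfl fun k _ => sum_congr rfl fun i _ => sum_congr rfl fun j _ => by ring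

end QuadForm

lemma g_pos (u : ℝ) : 0 < g u := by
  unfold g
  split_ifs with hu
  · norm_num
  rcases lt_or_gt_of_ne hu with hneg | hpos
  · have : Real.exp (2 * u) < 1 := Real.exp_lt_one_iff.mpr (by linarith)
    exact div_pos_of_neg_of_neg (by linarith) hneg
  · have : 1 < Real.exp (2 * u) := Real.one_lt_exp_iff.mpr (by linarith)
    exact div_pos (by linarith) hpos

lemma g_mul_sq (u : ℝ) : g u * u ^ 2 = (Real.exp (2 * u) - 1) * u := by
  unfold g
  split_ifs with hu
  · simp [hu]
  · field_simp

lemma mul_sq_mul_exp_le {ν u : ℝ} (hν : ν ≤ g u) (a : ℝ) :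
    ν * u ^ 2 * Real.exp (-2 * a) ≤ (Real.exp (-2 * (a - u)) - Real.exp (-2 * a)) * u := by
  have hexp : Real.exp (-2 * (a - u)) = Real.exp (-2 * a) * Real.exp (2 * u) := by
    rw [← Real.exp_add]; ring_nf
  calc ν * u ^ 2 * Real.exp (-2 * a) ≤ g u * u ^ 2 * Real.exp (-2 * a) := by gcongr
    _ = (Real.exp (-2 * (a - u)) - Real.exp (-2 * a)) * u := by rw [g_mul_sq, hexp]; ring

section Model

variable {n p : ℕ} (x : Fin (n + 1) → ℝ) (z : Fin n → Fin p → ℝ)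

lemma abs_sub_le_epsD (θ : Fin p → ℝ) (i j : Fin p) :
    |VD x z θ i j - JD z i j| ≤ epsD x z θ :=
  (le_ciSup (f := fun j => |VD x z θ i j - JD z i j|) (Set.finite_range _).bddAbove j).trans
    (le_ciSup (f := fun i => ⨆ j, |VD x z θ i j - JD z i j|) (Set.finite_range _).bddAbove i)

lemma quadForm_JD_le (θ h : Fin p → ℝ) :
    quadForm (JD z) h ≤ quadForm (VD x z θ) h + epsD x z θ * l1 h ^ 2 := by
  have := quadForm_le_l1_sq_mul (A := JD z - VD x z θ) (fun i j => by
    rw [Matrix.sub_apply, abs_sub_comm]; exact abs_sub_le_epsD x z θ i j) h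
  rw [quadForm_sub] at this
  linarith

omit x in
lemma quadForm_JD_nonneg (h : Fin p → ℝ) : 0 ≤ quadForm (JD z) h := by
  have := quadForm_weightedGram (2 / (n : ℝ)) (fun _ => 1) z h
  simp only [one_mul] at this
  unfold JD
  rw [this]
  positivity

lemma quadForm_VD (θ h : Fin p → ℝ) :
    quadForm (VD x z θ) h = 2 / ((n : ℝ) * (1 / n)) *
      ∑ k, Real.exp (-2 * θ ⬝ᵥ z k) * (x k.succ - x k.castSucc) ^ 2 * (h ⬝ᵥ z k) ^ 2 :=
  quadForm_weightedGram _ _ z h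

lemma dotProduct_psiD (θ h : Fin p → ℝ) :
    h ⬝ᵥ psiD x z θ = 1 / ((n : ℝ) * (1 / n)) *
      ∑ k, (Real.exp (-2 * θ ⬝ᵥ z k) * (x k.succ - x k.castSucc) ^ 2 - 1 / n) * (h ⬝ᵥ z k) := by
  simp only [psiD, dotProduct, mul_sum]
  rw [sum_comm]
  exact sum_congr rfl fun k _ => sum_congr rfl fun i _ => by ring

lemma dotProduct_psiD_sub (θ θ' h : Fin p → ℝ) :
    h ⬝ᵥ (psiD x z θ' - psiD x z θ) = 1 / ((n : ℝ) * (1 / n)) *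
      ∑ k, (Real.exp (-2 * θ' ⬝ᵥ z k) - Real.exp (-2 * θ ⬝ᵥ z k)) *
        (x k.succ - x k.castSucc) ^ 2 * (h ⬝ᵥ z k) := by
  rw [dotProduct_sub, dotProduct_psiD, dotProduct_psiD, ← mul_sub, ← sum_sub_distrib]
  exact congrArg _ (sum_congr rfl fun k _ => by ring)

lemma half_mul_quadForm_VD_le_dotProduct_psiD_sub {θ₀ θ : Fin p → ℝ} {ν : ℝ}
    (hg : ∀ k, ν ≤ g ((θ₀ - θ) ⬝ᵥ z k)) :
    ν / 2 * quadForm (VD x z θ₀) (θ₀ - θ) ≤ (θ₀ - θ) ⬝ᵥ (psiD x z θ - psiD x z θ₀) := by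
  -- `1 / (n * (1 / n))` is `1`, or `0` when `n = 0`; only its sign matters.
  set c := 1 / ((n : ℝ) * (1 / n))
  have hc : 0 ≤ c := by positivity
  rw [quadForm_VD, dotProduct_psiD_sub, show 2 / ((n : ℝ) * (1 / n)) = 2 * c by ring]
  calc ν / 2 * (2 * c * ∑ k, Real.exp (-2 * θ₀ ⬝ᵥ z k) * (x k.succ - x k.castSucc) ^ 2 *
          ((θ₀ - θ) ⬝ᵥ z k) ^ 2)
      = c * ∑ k, ν * ((θ₀ - θ) ⬝ᵥ z k) ^ 2 * Real.exp (-2 * θ₀ ⬝ᵥ z k) *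
          (x k.succ - x k.castSucc) ^ 2 := by
        simp only [mul_sum]
        exact sum_congr rfl fun k _ => by ring
    _ ≤ c * ∑ k, (Real.exp (-2 * θ ⬝ᵥ z k) - Real.exp (-2 * θ₀ ⬝ᵥ z k)) *
          (x k.succ - x k.castSucc) ^ 2 * (θ₀ - θ) ⬝ᵥ z k := by
        refine mul_le_mul_of_nonneg_left (sum_le_sum fun k _ => ?_) hc
        have hθ : θ ⬝ᵥ z k = θ₀ ⬝ᵥ z k - (θ₀ - θ) ⬝ᵥ z k := by rw [sub_dotProduct]; ring
        rw [hθ, mul_right_comm _ _ ((θ₀ - θ) ⬝ᵥ z k)]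
        exact mul_le_mul_of_nonneg_right (mul_sq_mul_exp_le (hg k) _) (sq_nonneg _)

end Model

theorem theorem_3_2_i_intermediate_general
    (n p : ℕ)
    (C : ℝ) (hC : 0 < C)
    (x : Fin (n + 1) → ℝ) (z : Fin n → Fin p → ℝ)
    (hz : ∀ k i, |z k i| ≤ C)
    (θ₀ θhat : Fin p → ℝ)
    (ν : ℝ) (hν : IsLeast (g '' Set.Icc (-(2 * C * l1 θ₀)) (2 * C * l1 θ₀)) ν)
    (γ : ℝ)
    (hfeas : linf (psiD x z θhat) ≤ γ)
    (hmin : l1 θhat ≤ l1 θ₀)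
    (htrue : linf (psiD x z θ₀) ≤ γ) :
    kappa (Finset.univ.filter fun j => θ₀ j ≠ 0) (JD z) ^ 2 *
        l1on (Finset.univ.filter fun j => θ₀ j ≠ 0) (θ₀ - θhat) ^ 2 ≤
      ((Finset.univ.filter fun j => θ₀ j ≠ 0).card : ℝ) * epsD x z θ₀ * l1 (θ₀ - θhat) ^ 2 +
        4 / ν * ((Finset.univ.filter fun j => θ₀ j ≠ 0).card : ℝ) * γ * l1 (θ₀ - θhat) := by
  set T := Finset.univ.filter fun j => θ₀ j ≠ 0
  set h := θ₀ - θhat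
  have hν_pos : 0 < ν := by
    obtain ⟨u, -, rfl⟩ := hν.1
    exact g_pos u
  have hg : ∀ k, ν ≤ g (h ⬝ᵥ z k) := fun k =>
    hν.2 ⟨_, abs_le.mp (abs_sub_dotProduct_le hC.le (hz k) hmin), rfl⟩
  have hV : quadForm (VD x z θ₀) h ≤ 4 / ν * γ * l1 h := by
    have := (half_mul_quadForm_VD_le_dotProduct_psiD_sub x z hg).trans
      (dotProduct_sub_le_of_linf_le h _ _ hfeas htrue)
    rw [div_mul_eq_mul_div, div_mul_eq_mul_div, le_div_iff₀ hν_pos]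
    linarith
  calc kappa T (JD z) ^ 2 * l1on T h ^ 2 ≤ T.card * quadForm (JD z) h :=
        kappa_sq_mul_l1on_sq_le (sub_mem_cone_support hmin) (quadForm_JD_nonneg z h)
    _ ≤ T.card * (epsD x z θ₀ * l1 h ^ 2 + 4 / ν * γ * l1 h) := by
        gcongr
        linarith [quadForm_JD_le x z θ₀ h]
    _ = T.card * epsD x z θ₀ * l1 h ^ 2 + 4 / ν * T.card * γ * l1 h := by ring

/-- Intermediate bound in the proof of Theorem 3.2(i): with `h := θ₀ - θ̂`, `S := |T₀|`,
`K₄ := 4/ν` and `ε := max_{i,j} |(V(θ₀) - J)_{ij}|`, one has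
`κ(T₀;J)² ‖h_{T₀}‖₁² ≤ S ε ‖h‖₁² + K₄ S γ ‖h‖₁`. -/
theorem theorem_3_2_i_intermediate
    (n p : ℕ) (hn : 0 < n) (hp : 0 < p)
    (C : ℝ) (hC : 0 < C)
    (x : Fin (n + 1) → ℝ) (z : Fin n → Fin p → ℝ)
    (hz : ∀ k i, |z k i| ≤ C)
    (θ₀ θhat : Fin p → ℝ)
    (ν : ℝ) (hν : IsLeast (g '' Set.Icc (-(2 * C * l1 θ₀)) (2 * C * l1 θ₀)) ν)
    (γ : ℝ) (hγ : 0 < γ)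
    (hfeas : linf (psiD x z θhat) ≤ γ)
    (hmin : l1 θhat ≤ l1 θ₀)
    (htrue : linf (psiD x z θ₀) ≤ γ)
    (hθ₀ : θ₀ ≠ 0) :
    kappa (Finset.univ.filter fun j => θ₀ j ≠ 0) (JD z) ^ 2 *
        l1on (Finset.univ.filter fun j => θ₀ j ≠ 0) (θ₀ - θhat) ^ 2 ≤
      ((Finset.univ.filter fun j => θ₀ j ≠ 0).card : ℝ) * epsD x z θ₀ * l1 (θ₀ - θhat) ^ 2 +
        4 / ν * ((Finset.univ.filter fun j => θ₀ j ≠ 0).card : ℝ) * γ * l1 (θ₀ - θhat) :=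
  theorem_3_2_i_intermediate_general n p C hC x z hz θ₀ θhat ν hν γ hfeas hmin htrue
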